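/- A vector field F analytic at the origin of ℝ², expressed in polar components, has Fourier coefficients of the form F_r^m(r) = r^{|m−1|} p_r(r²), F_θ^m(r) = r^{|m−1|} p_θ(r²) for polynomials p_r, p_θ (where m−1 may be replaced by m+1 depending on sign conventions); equivalently, the combinations F_r^m ± i F_θ^m satisfy the scalar regularity condition with azimuthal indices m∓1. -/

import Mathlib

open MeasureTheory intervalIntegral

/-!
Expand a scalar field `g` analytic at the origin as `∑ₙ Pₙ` with `Pₙ` homogeneous of degree `n`.
On the circle of radius `r`, `Pₙ (r cos θ, r sin θ) = rⁿ Pₙ (cos θ, sin θ)`, and a homogeneous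
polynomial of degree `n` restricted to the unit circle only contains the frequencies
`n, n - 2, …, -n`. Hence the `m`-th Fourier coefficient of `g` only sees the degrees
`n = |m| + 2l`, which gives `r^|m| p(r²)`. For the vector field,
`F_r ± i F_θ = e^{∓iθ} (F_x ± i F_y)`, which shifts the azimuthal index by `±1`.
-/

/-- The `m`-th Fourier coefficient of a scalar function on the disk given in polar
coordinates: `g^m(r) = (1/2π) ∫₀^{2π} g(r,θ) e^{-imθ} dθ`. -/
noncomputable def polarFourierCoeff (g : ℝ → ℝ → ℝ) (m : ℤ) (r : ℝ) : ℂ :=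
  (2 * Real.pi : ℂ)⁻¹ *
    ∫ θ in (0:ℝ)..(2 * Real.pi), (g r θ : ℂ) * Complex.exp (-(m : ℂ) * Complex.I * θ)

open Complex
open scoped NNReal ENNReal

noncomputable def angularCoeff (f : ℝ → ℂ) (m : ℤ) : ℂ :=
  (2 * Real.pi : ℂ)⁻¹ * ∫ θ in (0:ℝ)..(2 * Real.pi), f θ * exp (-(m : ℂ) * I * θ)

lemma norm_exp_neg_intCast_mul_I_mul (m : ℤ) (θ : ℝ) : ‖exp (-(m : ℂ) * I * θ)‖ = 1 := by
  rw [norm_exp]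
  simp

namespace angularCoeff

lemma add {f g : ℝ → ℂ} (hf : Continuous f) (hg : Continuous g) (m : ℤ) :
    angularCoeff (fun θ => f θ + g θ) m = angularCoeff f m + angularCoeff g m := by
  simp only [angularCoeff, add_mul]
  rw [integral_add (Continuous.intervalIntegrable (by fun_prop) _ _)
    (Continuous.intervalIntegrable (by fun_prop) _ _), mul_add]

lemma const_mul (f : ℝ → ℂ) (c : ℂ) (m : ℤ) :
    angularCoeff (fun θ => c * f θ) m = c * angularCoeff f m := by
  simp only [angularCoeff, mul_assoc, intervalIntegral.integral_const_mul]
  ring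

lemma exp_mul (f : ℝ → ℂ) (k m : ℤ) :
    angularCoeff (fun θ => exp (k * I * θ) * f θ) m = angularCoeff f (m - k) := by
  unfold angularCoeff
  congr 2 with θ
  dsimp only
  rw [mul_comm (exp _) (f θ), mul_assoc, ← Complex.exp_add]
  push_cast
  ring_nf

lemma const_of_ne_zero (c : ℂ) {m : ℤ} (hm : m ≠ 0) : angularCoeff (fun _ => c) m = 0 := by
  have hmI : -(m : ℂ) * I ≠ 0 := by simpa using hm
  have hperiod : exp (-(m : ℂ) * I * (2 * Real.pi : ℝ)) = 1 := by
    rw [show -(m : ℂ) * I * (2 * Real.pi : ℝ) = (-m : ℤ) * (2 * Real.pi * I) by push_cast; ring]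
    exact exp_int_mul_two_pi_mul_I _
  rw [angularCoeff, intervalIntegral.integral_const_mul, integral_exp_mul_complex hmI, hperiod]
  simp

lemma norm_le {f : ℝ → ℂ} {C : ℝ} (hf : ∀ θ, ‖f θ‖ ≤ C) (m : ℤ) : ‖angularCoeff f m‖ ≤ C := by
  have hint :
      ‖∫ θ in (0:ℝ)..(2 * Real.pi), f θ * exp (-(m : ℂ) * I * θ)‖ ≤ C * (2 * Real.pi) := by
    have := intervalIntegral.norm_integral_le_of_norm_le_const (a := 0) (b := 2 * Real.pi)
      (C := C) (f := fun θ : ℝ => f θ * exp (-(m : ℂ) * I * θ))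
      (fun θ _ => by rw [norm_mul, norm_exp_neg_intCast_mul_I_mul, mul_one]; exact hf θ)
    rwa [sub_zero, abs_of_pos Real.two_pi_pos] at this
  rw [angularCoeff, norm_mul, norm_inv]
  have h2π : ‖(2 * Real.pi : ℂ)‖ = 2 * Real.pi := by
    rw [← ofReal_ofNat, ← ofReal_mul, norm_real, Real.norm_of_nonneg Real.two_pi_pos.le]
  rw [h2π, inv_mul_le_iff₀ Real.two_pi_pos]
  linarith

lemma hasSum {F : ℕ → ℝ → ℂ} {f : ℝ → ℂ} {b : ℕ → ℝ} (hF : ∀ n, Continuous (F n))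
    (hFb : ∀ n θ, ‖F n θ‖ ≤ b n) (hb : Summable b) (hFf : ∀ θ, HasSum (fun n => F n θ) (f θ))
    (m : ℤ) : HasSum (fun n => angularCoeff (F n) m) (angularCoeff f m) := by
  have hcont : ∀ n, Continuous fun θ : ℝ => F n θ * exp (-(m : ℂ) * I * θ) := fun n => by
    have := hF n
    fun_prop
  refine (intervalIntegral.hasSum_integral_of_dominated_convergence (fun n _ => b n)
    (fun n => (hcont n).aestronglyMeasurable)
    (fun n => ae_of_all _ fun θ _ => ?_) (ae_of_all _ fun _ _ => hb) intervalIntegrable_const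
    (ae_of_all _ fun θ _ => (hFf θ).mul_right _)).mul_left _
  rw [norm_mul, norm_exp_neg_intCast_mul_I_mul, mul_one]
  exact hFb n θ

end angularCoeff

lemma norm_cos_sin_le_one (θ : ℝ) : ‖(Real.cos θ, Real.sin θ)‖ ≤ 1 :=
  max_le (by simpa using Real.abs_cos_le_one θ) (by simpa using Real.abs_sin_le_one θ)

lemma norm_mul_cos_mul_sin_le (r θ : ℝ) : ‖(r * Real.cos θ, r * Real.sin θ)‖ ≤ |r| := by
  rw [← smul_eq_mul, ← smul_eq_mul, ← Prod.smul_mk, norm_smul, Real.norm_eq_abs]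
  exact mul_le_of_le_one_right (abs_nonneg r) (norm_cos_sin_le_one θ)

lemma ContinuousMultilinearMap.norm_apply_circle_le {n : ℕ} {G : Type*} [NormedAddCommGroup G]
    [NormedSpace ℝ G] (f : ContinuousMultilinearMap ℝ (fun _ : Fin n => ℝ × ℝ) G) (θ : ℝ) :
    ‖f fun _ => (Real.cos θ, Real.sin θ)‖ ≤ ‖f‖ := by
  calc ‖f fun _ => (Real.cos θ, Real.sin θ)‖ ≤ ‖f‖ * ∏ _i : Fin n, ‖(Real.cos θ, Real.sin θ)‖ :=
        f.le_opNorm _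
    _ ≤ ‖f‖ * 1 := by
        gcongr; exact Finset.prod_le_one (fun _ _ => norm_nonneg _) fun _ _ => norm_cos_sin_le_one θ
    _ = ‖f‖ := mul_one _

lemma ContinuousMultilinearMap.exists_apply_circle_eq {n : ℕ}
    (f : ContinuousMultilinearMap ℝ (fun _ : Fin (n + 1) => ℝ × ℝ) ℂ) :
    ∃ g h : ContinuousMultilinearMap ℝ (fun _ : Fin n => ℝ × ℝ) ℂ, ∀ θ : ℝ,
      f (fun _ => (Real.cos θ, Real.sin θ)) =
        exp (θ * I) * g (fun _ => (Real.cos θ, Real.sin θ)) +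
          exp (-θ * I) * h (fun _ => (Real.cos θ, Real.sin θ)) := by
  set g₁ := f.curryLeft (1, 0)
  set g₂ := f.curryLeft (0, 1)
  refine ⟨(2 : ℂ)⁻¹ • (g₁ - I • g₂), (2 : ℂ)⁻¹ • (g₁ + I • g₂), fun θ => ?_⟩
  set u : ℝ × ℝ := (Real.cos θ, Real.sin θ)
  have hu : u = Real.cos θ • ((1 : ℝ), (0 : ℝ)) + Real.sin θ • ((0 : ℝ), (1 : ℝ)) := by
    simp [u]
  have hcurry : f.curryLeft u = Real.cos θ • g₁ + Real.sin θ • g₂ := by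
    rw [hu, map_add, map_smul, map_smul]
  have hf : f (fun _ => u) = f.curryLeft u (fun _ => u) := by
    rw [f.curryLeft_apply]
    exact congrArg f (Fin.cons_self_tail _).symm
  rw [hf, hcurry]
  simp only [add_apply, sub_apply, smul_apply, real_smul, smul_eq_mul, ofReal_cos, ofReal_sin,
    Complex.cos, Complex.sin]
  ring

theorem angularCoeff_multilinear_circle_eq_zero {n : ℕ}
    (f : ContinuousMultilinearMap ℝ (fun _ : Fin n => ℝ × ℝ) ℂ) {m : ℤ}
    (hm : ∀ l : ℕ, n ≠ m.natAbs + 2 * l) :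
    angularCoeff (fun θ => f fun _ => (Real.cos θ, Real.sin θ)) m = 0 := by
  induction n generalizing m with
  | zero =>
    have hm0 : m ≠ 0 := by have := hm 0; omega
    have hconst : (fun θ : ℝ => f fun _ => (Real.cos θ, Real.sin θ)) = fun _ => f 0 :=
      funext fun _ => congrArg f (Subsingleton.elim _ _)
    rw [hconst, angularCoeff.const_of_ne_zero _ hm0]
  | succ n ih =>
    obtain ⟨g, h, hf⟩ := f.exists_apply_circle_eq
    have hf' : (fun θ : ℝ => f fun _ => (Real.cos θ, Real.sin θ)) = fun θ : ℝ =>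
        exp ((1 : ℤ) * I * θ) * g (fun _ => (Real.cos θ, Real.sin θ)) +
          exp ((-1 : ℤ) * I * θ) * h (fun _ => (Real.cos θ, Real.sin θ)) := by
      ext θ; rw [hf θ]; push_cast; ring_nf
    rw [hf', angularCoeff.add (by fun_prop) (by fun_prop), angularCoeff.exp_mul,
      angularCoeff.exp_mul, ih g fun l => ?_, ih h fun l => ?_, add_zero]
    · have := hm l; have := hm (l + 1); omega
    · have := hm l; have := hm (l + 1); omega

theorem analyticOnNhd_tsum_mul_pow {d : ℕ → ℂ} {R : ℝ≥0} {C : ℝ} (hd : ∀ l, ‖d l‖ * R ^ l ≤ C) :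
    AnalyticOnNhd ℝ (fun s : ℝ => ∑' l, d l * (s : ℂ) ^ l) (Set.Ioo (-R) R) := by
  set P := FormalMultilinearSeries.ofScalars ℂ d
  have hR : (R : ℝ≥0∞) ≤ P.radius :=
    P.le_radius_of_bound C fun l => by simpa [P] using hd l
  intro s hs
  have hs' : (s : ℂ) ∈ Metric.eball (0 : ℂ) P.radius := by
    refine Metric.mem_eball.2 (lt_of_lt_of_le ?_ hR)
    rw [edist_zero_right, enorm_eq_nnnorm, ENNReal.coe_lt_coe, ← NNReal.coe_lt_coe, coe_nnnorm,
      norm_real, Real.norm_eq_abs]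
    exact abs_lt.2 hs
  have hP := (P.hasFPowerSeriesOnBall (pos_of_gt hs')).analyticAt_of_mem hs'
  have := (hP.restrictScalars (𝕜 := ℝ)).comp (ofRealCLM.analyticAt s)
  simpa [Function.comp_def, FormalMultilinearSeries.sum, P,
    FormalMultilinearSeries.ofScalars_apply_eq, mul_comm] using this

theorem AnalyticAt.ofReal {E : Type*} [NormedAddCommGroup E] [NormedSpace ℝ E] {f : E → ℝ}
    {x : E} (hf : AnalyticAt ℝ f x) : AnalyticAt ℝ (fun y => (f y : ℂ)) x :=
  (ofRealCLM.analyticAt _).comp hf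

theorem HasFPowerSeriesOnBall.hasSum_angularCoeff {g : ℝ × ℝ → ℂ}
    {ps : FormalMultilinearSeries ℝ (ℝ × ℝ) ℂ} {ρ : ℝ≥0∞} (hps : HasFPowerSeriesOnBall g ps 0 ρ)
    {r : ℝ} (hr : ENNReal.ofReal |r| < ρ) (m : ℤ) :
    HasSum (fun n => r ^ n * angularCoeff (fun θ => ps n fun _ => (Real.cos θ, Real.sin θ)) m)
      (angularCoeff (fun θ => g (r * Real.cos θ, r * Real.sin θ)) m) := by
  obtain ⟨r₀, hr₀, hr₀ρ⟩ := ENNReal.lt_iff_exists_nnreal_btwn.1 hr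
  have hr₀' : |r| < r₀ := by
    rwa [← ENNReal.ofReal_coe_nnreal, ENNReal.ofReal_lt_ofReal_iff_of_nonneg (abs_nonneg r)] at hr₀
  obtain ⟨C, -, hC⟩ := ps.norm_mul_pow_le_of_lt_radius (hr₀ρ.trans_le hps.r_le)
  have hpolar : ∀ n θ, (ps n fun _ => ((r * Real.cos θ, r * Real.sin θ) : ℝ × ℝ)) =
      r ^ n * ps n fun _ => (Real.cos θ, Real.sin θ) := fun n θ => by
    simpa only [Prod.smul_mk, smul_eq_mul, Finset.prod_const, Finset.card_univ, Fintype.card_fin,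
      real_smul, ofReal_pow] using
      (ps n).map_smul_univ (fun _ => r) fun _ => (Real.cos θ, Real.sin θ)
  have hr₀pos : (0 : ℝ) < r₀ := (abs_nonneg r).trans_lt hr₀'
  have hq : |r| / r₀ < 1 := (div_lt_one hr₀pos).2 hr₀'
  have hbound : ∀ n θ, ‖ps n fun _ => ((r * Real.cos θ, r * Real.sin θ) : ℝ × ℝ)‖ ≤
      C * (|r| / r₀) ^ n := fun n θ => by
    rw [hpolar, norm_mul, norm_pow, norm_real, Real.norm_eq_abs, div_pow]
    calc |r| ^ n * ‖ps n fun _ => (Real.cos θ, Real.sin θ)‖ ≤ |r| ^ n * ‖ps n‖ := by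
          gcongr; exact (ps n).norm_apply_circle_le θ
      _ = (‖ps n‖ * r₀ ^ n) * |r| ^ n / r₀ ^ n := by field_simp
      _ ≤ C * |r| ^ n / r₀ ^ n := by gcongr; exact hC n
      _ = C * (|r| ^ n / r₀ ^ n) := mul_div_assoc _ _ _
  have hsum := angularCoeff.hasSum (fun n => by fun_prop) hbound
    ((summable_geometric_of_lt_one (by positivity) hq).mul_left C)
    (fun θ => hps.hasSum ?_) m
  · simpa only [hpolar, angularCoeff.const_mul, zero_add] using hsum
  · rw [Metric.mem_eball, edist_zero_right, ← ofReal_norm]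
    exact lt_of_le_of_lt (ENNReal.ofReal_le_ofReal (norm_mul_cos_mul_sin_le r θ)) (hr₀.trans hr₀ρ)

theorem AnalyticAt.exists_angularCoeff_eq_pow_natAbs_mul {g : ℝ × ℝ → ℂ} (hg : AnalyticAt ℝ g 0)
    (m : ℤ) :
    ∃ (p : ℝ → ℂ) (ε : ℝ), 0 < ε ∧ AnalyticOnNhd ℝ p (Set.Ioo (-ε) ε) ∧
      ∀ r : ℝ, |r| < ε →
        angularCoeff (fun θ => g (r * Real.cos θ, r * Real.sin θ)) m =
          r ^ m.natAbs * p (r ^ 2) := by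
  obtain ⟨ps, ρ, hps⟩ := hg
  obtain ⟨r₀, hr₀, hr₀ρ⟩ := ENNReal.lt_iff_exists_nnreal_btwn.1 hps.r_pos
  have hr₀pos : (0 : ℝ) < r₀ := by exact_mod_cast hr₀
  obtain ⟨C, -, hC⟩ := ps.norm_mul_pow_le_of_lt_radius (hr₀ρ.trans_le hps.r_le)
  set N := m.natAbs
  set a : ℕ → ℂ := fun n => angularCoeff (fun θ => ps n fun _ => (Real.cos θ, Real.sin θ)) m
  have ha : ∀ n, ‖a n‖ ≤ ‖ps n‖ := fun n =>
    angularCoeff.norm_le (fun θ => (ps n).norm_apply_circle_le θ) m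
  have hp : AnalyticOnNhd ℝ (fun s : ℝ => ∑' l, a (N + 2 * l) * (s : ℂ) ^ l)
      (Set.Ioo (-(r₀ ^ 2 : ℝ≥0)) (r₀ ^ 2 : ℝ≥0)) := by
    refine analyticOnNhd_tsum_mul_pow (C := C / r₀ ^ N) fun l => ?_
    rw [le_div_iff₀ (by positivity)]
    calc ‖a (N + 2 * l)‖ * ((r₀ ^ 2 : ℝ≥0) : ℝ) ^ l * r₀ ^ N
        = ‖a (N + 2 * l)‖ * r₀ ^ (N + 2 * l) := by push_cast; ring
      _ ≤ ‖ps (N + 2 * l)‖ * r₀ ^ (N + 2 * l) := by gcongr; exact ha _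
      _ ≤ C := hC _
  refine ⟨_, min r₀ (r₀ ^ 2), by positivity, hp.mono ?_, fun r hr => ?_⟩
  · exact Set.Ioo_subset_Ioo (by push_cast; exact neg_le_neg (min_le_right _ _))
      (by push_cast; exact min_le_right _ _)
  have hrρ : ENNReal.ofReal |r| < ρ := by
    rw [← ENNReal.ofReal_coe_nnreal] at hr₀ρ
    exact lt_of_le_of_lt (ENNReal.ofReal_le_ofReal (hr.le.trans (min_le_left _ _))) hr₀ρ
  have hvanish : ∀ n ∉ Set.range (fun l => N + 2 * l), (r : ℂ) ^ n * a n = 0 := fun n hn => by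
    rw [show a n = 0 from angularCoeff_multilinear_circle_eq_zero (ps n) fun l h => hn ⟨l, h.symm⟩,
      mul_zero]
  have hinj : Function.Injective (fun l : ℕ => N + 2 * l) := fun _ _ h => by simpa using h
  rw [← ((hinj.hasSum_iff hvanish).2 (hps.hasSum_angularCoeff hrρ m)).tsum_eq, ← tsum_mul_left]
  congr 1 with l
  simp only [Function.comp_apply]
  push_cast
  ring

lemma angularCoeff_polar_add_I_mul {a b : ℝ → ℝ} (ha : Continuous a) (hb : Continuous b) (m : ℤ) :
    angularCoeff (fun θ => ((a θ * Real.cos θ + b θ * Real.sin θ : ℝ) : ℂ)) m +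
        I * angularCoeff (fun θ => ((-a θ * Real.sin θ + b θ * Real.cos θ : ℝ) : ℂ)) m =
      angularCoeff (fun θ => a θ + I * b θ) (m + 1) := by
  have hrot : ∀ θ : ℝ, ((a θ * Real.cos θ + b θ * Real.sin θ : ℝ) : ℂ) +
      I * ((-a θ * Real.sin θ + b θ * Real.cos θ : ℝ) : ℂ) =
        exp (((-1 : ℤ) : ℂ) * I * θ) * (a θ + I * b θ) := fun θ => by
    rw [show ((-1 : ℤ) : ℂ) * I * θ = (-θ : ℝ) * I by push_cast; ring, exp_mul_I]
    push_cast
    rw [Complex.cos_neg, Complex.sin_neg]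
    linear_combination ((b θ : ℂ) * sin θ) * I_sq
  rw [← angularCoeff.const_mul, ← angularCoeff.add (by fun_prop) (by fun_prop), funext hrot,
    angularCoeff.exp_mul, sub_neg_eq_add]

lemma angularCoeff_polar_sub_I_mul {a b : ℝ → ℝ} (ha : Continuous a) (hb : Continuous b) (m : ℤ) :
    angularCoeff (fun θ => ((a θ * Real.cos θ + b θ * Real.sin θ : ℝ) : ℂ)) m -
        I * angularCoeff (fun θ => ((-a θ * Real.sin θ + b θ * Real.cos θ : ℝ) : ℂ)) m =
      angularCoeff (fun θ => a θ - I * b θ) (m - 1) := by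
  have hrot : ∀ θ : ℝ, ((a θ * Real.cos θ + b θ * Real.sin θ : ℝ) : ℂ) +
      (-I) * ((-a θ * Real.sin θ + b θ * Real.cos θ : ℝ) : ℂ) =
        exp (((1 : ℤ) : ℂ) * I * θ) * (a θ - I * b θ) := fun θ => by
    rw [show ((1 : ℤ) : ℂ) * I * θ = (θ : ℝ) * I by push_cast; ring, exp_mul_I]
    push_cast
    linear_combination ((b θ : ℂ) * sin θ) * I_sq
  rw [sub_eq_add_neg, ← neg_mul, ← angularCoeff.const_mul,
    ← angularCoeff.add (by fun_prop) (by fun_prop), funext hrot, angularCoeff.exp_mul]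

/-- a vector field `F = F_x ê_x + F_y ê_y` analytic at the origin of `ℝ²`
has polar components `F_r = F_x cos θ + F_y sin θ`, `F_θ = −F_x sin θ + F_y cos θ`
whose Fourier coefficients are of the form `F_r^m(r) = r^{|m∓1|} p_r(r²)`,
`F_θ^m(r) = r^{|m∓1|} p_θ(r²)`; equivalently, the combinations `F_r^m ± i F_θ^m`
satisfy the scalar regularity condition with azimuthal indices `m ± 1`:
`(F_r^m + iF_θ^m)(r) = r^{|m+1|} p(r²)` and `(F_r^m − iF_θ^m)(r) = r^{|m−1|} q(r²)`
for analytic `p, q`. -/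
theorem stmt_13 (Fx Fy : ℝ × ℝ → ℝ)
    (hFx : AnalyticOnNhd ℝ Fx (Metric.ball (0 : ℝ × ℝ) 1))
    (hFy : AnalyticOnNhd ℝ Fy (Metric.ball (0 : ℝ × ℝ) 1))
    (Fr Fθ : ℝ → ℝ → ℝ)
    (hFr : Fr = fun r θ => Fx (r * Real.cos θ, r * Real.sin θ) * Real.cos θ +
        Fy (r * Real.cos θ, r * Real.sin θ) * Real.sin θ)
    (hFθ : Fθ = fun r θ => -Fx (r * Real.cos θ, r * Real.sin θ) * Real.sin θ +
        Fy (r * Real.cos θ, r * Real.sin θ) * Real.cos θ)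
    (m : ℤ) :
    ∃ (p q : ℝ → ℂ) (ε : ℝ), 0 < ε ∧
      AnalyticOnNhd ℝ p (Set.Ioo (-ε) ε) ∧ AnalyticOnNhd ℝ q (Set.Ioo (-ε) ε) ∧
      ∀ r : ℝ, |r| < ε →
        polarFourierCoeff Fr m r + Complex.I * polarFourierCoeff Fθ m r =
          (r : ℂ) ^ (m + 1).natAbs * p (r ^ 2) ∧
        polarFourierCoeff Fr m r - Complex.I * polarFourierCoeff Fθ m r =
          (r : ℂ) ^ (m - 1).natAbs * q (r ^ 2) := by
  have hx₀ := (hFx 0 (Metric.mem_ball_self one_pos)).ofReal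
  have hy₀ := (hFy 0 (Metric.mem_ball_self one_pos)).ofReal
  obtain ⟨p, ε₁, hε₁, hp, hp_eq⟩ :=
    (hx₀.add (analyticAt_const.mul hy₀)).exists_angularCoeff_eq_pow_natAbs_mul (m + 1)
  obtain ⟨q, ε₂, hε₂, hq, hq_eq⟩ :=
    (hx₀.sub (analyticAt_const.mul hy₀)).exists_angularCoeff_eq_pow_natAbs_mul (m - 1)
  have hε₁' : min 1 (min ε₁ ε₂) ≤ ε₁ := (min_le_right _ _).trans (min_le_left _ _)
  have hε₂' : min 1 (min ε₁ ε₂) ≤ ε₂ := (min_le_right _ _).trans (min_le_right _ _)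
  refine ⟨p, q, min 1 (min ε₁ ε₂), by positivity,
    hp.mono (Set.Ioo_subset_Ioo (neg_le_neg hε₁') hε₁'),
    hq.mono (Set.Ioo_subset_Ioo (neg_le_neg hε₂') hε₂'), fun r hr => ?_⟩
  have hball : ∀ θ, (r * Real.cos θ, r * Real.sin θ) ∈ Metric.ball (0 : ℝ × ℝ) 1 := fun θ =>
    mem_ball_zero_iff.2 <| (norm_mul_cos_mul_sin_le r θ).trans_lt (hr.trans_le (min_le_left _ _))
  have hcx := hFx.continuousOn.comp_continuous (by fun_prop) hball
  have hcy := hFy.continuousOn.comp_continuous (by fun_prop) hball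
  subst hFr hFθ
  -- `polarFourierCoeff g m r` unfolds to `angularCoeff (fun θ => g r θ) m`
  exact ⟨(angularCoeff_polar_add_I_mul hcx hcy m).trans (hp_eq r (hr.trans_le hε₁')),
    (angularCoeff_polar_sub_I_mul hcx hcy m).trans (hq_eq r (hr.trans_le hε₂'))⟩
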